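/- Let B, C > 0, let q be a probability density on ℝ supported in [−B,B], and let p_T be a bounded probability density on ℝ supported in [−C,C]. For α ∈ (0,1) let ω_α(x) = (1/α) ρ(x/α) · H(α,x). Then ∫_ℝ p_T(x) log(p_T(x)/ω_α(x)) dx → ∫_ℝ p_T(x) log(p_T(x)/ρ(x)) dx as α → 1 from the left. -/

import Mathlib

/-!
As `α → 1`, `H(α,x) → 1` by dominated convergence (the exponent tends to `0` and is bounded on
the support of `q`), so `ω_α → ρ` pointwise. For `α ∈ [1/2, 3/2]` and `|x| ≤ C` that exponent is
at most `2(B² + 2BC)` in absolute value, which pinches `ω_α` between two positive constants on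
`[-C, C]`. Together with `0 ≤ p_T ≤ K` this bounds `|p_T log(p_T/ω_α)|` by a constant times the
indicator of `[-C, C]`, and dominated convergence gives the limit, even along the full
neighbourhood of `1`.
-/

open MeasureTheory Real Filter
open scoped ENNReal Topology

/-- The standard Gaussian density on `ℝ`: `ρ(x) = (2π)^{-1/2} exp(-x²/2)`. -/
noncomputable def stdGaussianDensity (x : ℝ) : ℝ :=
  (Real.sqrt (2 * Real.pi))⁻¹ * Real.exp (-x ^ 2 / 2)

/-- The correction factor `H(α,x) = ∫ ν, exp(-(1/(2α²))((1-α)² ν² - 2(1-α) x ν)) q(ν) dν`. -/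
noncomputable def Hfun (q : ℝ → ℝ) (α x : ℝ) : ℝ :=
  ∫ ν : ℝ, Real.exp (-(1 / (2 * α ^ 2)) * ((1 - α) ^ 2 * ν ^ 2 - 2 * (1 - α) * x * ν)) * q ν

/-- The density `ω_α(x) = (1/α) ρ(x/α) · H(α,x)` of `(1-α)X' + αε`. -/
noncomputable def omegaFun (q : ℝ → ℝ) (α x : ℝ) : ℝ :=
  (1 / α) * stdGaussianDensity (x / α) * Hfun q α x

open Set Function

lemma stdGaussianDensity_pos (x : ℝ) : 0 < stdGaussianDensity x := by
  unfold stdGaussianDensity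
  positivity

lemma continuous_stdGaussianDensity : Continuous stdGaussianDensity := by
  unfold stdGaussianDensity
  fun_prop

lemma stdGaussianDensity_le_of_abs_le {y z : ℝ} (h : |y| ≤ |z|) :
    stdGaussianDensity z ≤ stdGaussianDensity y := by
  unfold stdGaussianDensity
  refine mul_le_mul_of_nonneg_left (exp_le_exp.2 ?_) (by positivity)
  linarith [sq_le_sq.2 h]

section ExpWeighted

variable {Ω : Type*} {q f : Ω → ℝ} {S : Set Ω} {M : ℝ}

lemma norm_exp_mul_le_of_abs_le (hq : ∀ ν, 0 ≤ q ν) (hq_supp : support q ⊆ S)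
    (hf : ∀ ν ∈ S, |f ν| ≤ M) (ν : Ω) : ‖exp (f ν) * q ν‖ ≤ exp M * q ν := by
  by_cases h : q ν = 0
  · simp [h]
  · rw [norm_of_nonneg (by have := hq ν; positivity)]
    exact mul_le_mul_of_nonneg_right (exp_le_exp.2 (abs_le.1 (hf ν (hq_supp h))).2) (hq ν)

lemma exp_neg_mul_le_of_abs_le (hq : ∀ ν, 0 ≤ q ν) (hq_supp : support q ⊆ S)
    (hf : ∀ ν ∈ S, |f ν| ≤ M) (ν : Ω) : exp (-M) * q ν ≤ exp (f ν) * q ν := by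
  by_cases h : q ν = 0
  · simp [h]
  · exact mul_le_mul_of_nonneg_right (exp_le_exp.2 (abs_le.1 (hf ν (hq_supp h))).1) (hq ν)

lemma integral_exp_mul_mem_Icc [MeasurableSpace Ω] {μ : Measure Ω} (hq : ∀ ν, 0 ≤ q ν)
    (hq_one : ∫ ν, q ν ∂μ = 1) (hq_supp : support q ⊆ S) (hf_meas : AEStronglyMeasurable f μ)
    (hf : ∀ ν ∈ S, |f ν| ≤ M) :
    ∫ ν, exp (f ν) * q ν ∂μ ∈ Icc (exp (-M)) (exp M) := by
  have hq_int : Integrable q μ := .of_integral_ne_zero (by simp [hq_one])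
  have hint : Integrable (fun ν => exp (f ν) * q ν) μ :=
    (hq_int.const_mul (exp M)).mono'
      ((continuous_exp.comp_aestronglyMeasurable hf_meas).mul hq_int.aestronglyMeasurable)
      (.of_forall (norm_exp_mul_le_of_abs_le hq hq_supp hf))
  constructor
  · simpa [integral_const_mul, hq_one] using
      integral_mono (hq_int.const_mul _) hint (exp_neg_mul_le_of_abs_le hq hq_supp hf)
  · simpa [integral_const_mul, hq_one] using
      integral_mono hint (hq_int.const_mul _)
        fun ν => (le_abs_self _).trans (norm_exp_mul_le_of_abs_le hq hq_supp hf ν)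

end ExpWeighted

noncomputable def hfunExponent (α x ν : ℝ) : ℝ :=
  -(1 / (2 * α ^ 2)) * ((1 - α) ^ 2 * ν ^ 2 - 2 * (1 - α) * x * ν)

lemma abs_hfunExponent_le {B C α x ν : ℝ} (hα : α ∈ Icc (1 / 2 : ℝ) (3 / 2)) (hx : |x| ≤ C)
    (hν : |ν| ≤ B) : |hfunExponent α x ν| ≤ 2 * (B ^ 2 + 2 * B * C) := by
  obtain ⟨hα₁, hα₂⟩ := hα
  have hcoef : 1 / (2 * α ^ 2) ≤ 2 := by
    rw [div_le_iff₀ (by positivity)]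
    nlinarith
  have hC : 0 ≤ C := (abs_nonneg x).trans hx
  have h1α : |1 - α| ≤ 1 := abs_le.2 ⟨by linarith, by linarith⟩
  have hpoly : |(1 - α) ^ 2 * ν ^ 2 - 2 * (1 - α) * x * ν| ≤ B ^ 2 + 2 * B * C := calc
    _ ≤ |1 - α| ^ 2 * |ν| ^ 2 + 2 * |1 - α| * |x| * |ν| := by
      refine (abs_sub _ _).trans_eq ?_
      simp only [abs_mul, abs_pow, abs_two]
    _ ≤ 1 ^ 2 * B ^ 2 + 2 * 1 * C * B := by gcongr
    _ = _ := by ring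
  rw [hfunExponent, abs_mul, abs_neg, abs_of_pos (by positivity)]
  exact mul_le_mul hcoef hpoly (abs_nonneg _) zero_le_two

section OmegaFun

variable {B : ℝ} {q : ℝ → ℝ}

lemma Hfun_mem_Icc (hq : ∀ ν, 0 ≤ q ν) (hq_one : ∫ ν, q ν = 1) (hq_supp : support q ⊆ Icc (-B) B)
    {C α x : ℝ} (hα : α ∈ Icc (1 / 2 : ℝ) (3 / 2)) (hx : |x| ≤ C) :
    Hfun q α x ∈ Icc (exp (-(2 * (B ^ 2 + 2 * B * C)))) (exp (2 * (B ^ 2 + 2 * B * C))) :=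
  integral_exp_mul_mem_Icc hq hq_one hq_supp
    (by unfold hfunExponent; fun_prop : Continuous (hfunExponent α x)).aestronglyMeasurable
    fun _ hν => abs_hfunExponent_le hα hx (abs_le.2 hν)

lemma tendsto_Hfun_one (hq : ∀ ν, 0 ≤ q ν) (hq_one : ∫ ν, q ν = 1)
    (hq_supp : support q ⊆ Icc (-B) B) (x : ℝ) :
    Tendsto (fun α => Hfun q α x) (𝓝 1) (𝓝 1) := by
  have hq_int : Integrable q := .of_integral_ne_zero (by simp [hq_one])
  have hlim : ∀ ν, Tendsto (fun α => exp (hfunExponent α x ν) * q ν) (𝓝 1) (𝓝 (q ν)) := by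
    intro ν
    have hcont : ContinuousAt (fun α => exp (hfunExponent α x ν) * q ν) 1 := by
      unfold hfunExponent
      fun_prop (disch := norm_num)
    simpa [hfunExponent] using hcont.tendsto
  have h : Tendsto (fun α => Hfun q α x) (𝓝 1) (𝓝 (∫ ν, q ν)) :=
    tendsto_integral_filter_of_dominated_convergence
      (fun ν => exp (2 * (B ^ 2 + 2 * B * |x|)) * q ν) ?_ ?_ (hq_int.const_mul _) (.of_forall hlim)
  · rwa [hq_one] at h
  · refine .of_forall fun α => ?_
    exact (by unfold hfunExponent; fun_prop : Continuous fun ν => exp (hfunExponent α x ν))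
      |>.aestronglyMeasurable.mul hq_int.aestronglyMeasurable
  · filter_upwards [Icc_mem_nhds (by norm_num : (1 / 2 : ℝ) < 1) (by norm_num : (1 : ℝ) < 3 / 2)]
      with α hα
    exact .of_forall (norm_exp_mul_le_of_abs_le hq hq_supp
      fun _ hν => abs_hfunExponent_le hα le_rfl (abs_le.2 hν))

lemma aestronglyMeasurable_Hfun (hq : AEStronglyMeasurable q) (α : ℝ) :
    AEStronglyMeasurable (Hfun q α) := by
  have hexp : Continuous fun p : ℝ × ℝ => exp (hfunExponent α p.1 p.2) := by
    unfold hfunExponent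
    fun_prop
  have hprod : AEStronglyMeasurable (fun p : ℝ × ℝ => exp (hfunExponent α p.1 p.2) * q p.2)
      (volume.prod volume) := hexp.aestronglyMeasurable.mul hq.comp_snd
  exact hprod.integral_prod_right'

lemma omegaFun_mem_Icc (hq : ∀ ν, 0 ≤ q ν) (hq_one : ∫ ν, q ν = 1)
    (hq_supp : support q ⊆ Icc (-B) B) {C α x : ℝ} (hα : α ∈ Icc (1 / 2 : ℝ) (3 / 2))
    (hx : |x| ≤ C) :
    omegaFun q α x ∈ Icc (2 / 3 * stdGaussianDensity (2 * C) * exp (-(2 * (B ^ 2 + 2 * B * C))))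
      (2 * stdGaussianDensity 0 * exp (2 * (B ^ 2 + 2 * B * C))) := by
  obtain ⟨hH₁, hH₂⟩ := Hfun_mem_Icc hq hq_one hq_supp hα hx
  obtain ⟨hα₁, hα₂⟩ := hα
  have hα₀ : 0 < α := by linarith
  have hxα : |x / α| ≤ |2 * C| := by
    rw [abs_div, abs_of_pos hα₀, abs_of_nonneg (by linarith [abs_nonneg x] : (0 : ℝ) ≤ 2 * C),
      div_le_iff₀ hα₀]
    nlinarith [abs_nonneg x]
  have hinv₁ : 2 / 3 ≤ 1 / α := by rw [le_div_iff₀ hα₀]; linarith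
  have hinv₂ : 1 / α ≤ 2 := by rw [div_le_iff₀ hα₀]; linarith
  have hρ₀ := stdGaussianDensity_pos 0
  exact ⟨mul_le_mul (mul_le_mul hinv₁ (stdGaussianDensity_le_of_abs_le hxα)
      (stdGaussianDensity_pos _).le (by positivity)) hH₁ (exp_pos _).le
      (mul_pos (one_div_pos.2 hα₀) (stdGaussianDensity_pos _)).le,
    mul_le_mul (mul_le_mul hinv₂ (stdGaussianDensity_le_of_abs_le (by simp))
      (stdGaussianDensity_pos _).le zero_le_two) hH₂ ((exp_pos _).le.trans hH₁) (by positivity)⟩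

lemma exists_abs_log_omegaFun_le (hq : ∀ ν, 0 ≤ q ν) (hq_one : ∫ ν, q ν = 1)
    (hq_supp : support q ⊆ Icc (-B) B) (C : ℝ) :
    ∃ L, ∀ α ∈ Icc (1 / 2 : ℝ) (3 / 2), ∀ x ∈ Icc (-C) C,
      0 < omegaFun q α x ∧ |log (omegaFun q α x)| ≤ L := by
  set a := 2 / 3 * stdGaussianDensity (2 * C) * exp (-(2 * (B ^ 2 + 2 * B * C)))
  set b := 2 * stdGaussianDensity 0 * exp (2 * (B ^ 2 + 2 * B * C))
  have ha : 0 < a := mul_pos (mul_pos (by norm_num) (stdGaussianDensity_pos _)) (exp_pos _)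
  refine ⟨max |log a| |log b|, fun α hα x hx => ?_⟩
  obtain ⟨hωa, hωb⟩ := omegaFun_mem_Icc hq hq_one hq_supp hα (abs_le.2 hx)
  have hω : 0 < omegaFun q α x := ha.trans_le hωa
  exact ⟨hω, abs_le_max_abs_abs (log_le_log ha hωa) (log_le_log hω hωb)⟩

lemma tendsto_omegaFun (hq : ∀ ν, 0 ≤ q ν) (hq_one : ∫ ν, q ν = 1)
    (hq_supp : support q ⊆ Icc (-B) B) (x : ℝ) :
    Tendsto (fun α => omegaFun q α x) (𝓝 1) (𝓝 (stdGaussianDensity x)) := by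
  have hρ : ContinuousAt (fun α : ℝ => 1 / α * stdGaussianDensity (x / α)) 1 := by
    have := continuous_stdGaussianDensity
    fun_prop (disch := norm_num)
  simpa [omegaFun] using hρ.tendsto.mul (tendsto_Hfun_one hq hq_one hq_supp x)

lemma aestronglyMeasurable_omegaFun (hq : AEStronglyMeasurable q) (α : ℝ) :
    AEStronglyMeasurable (omegaFun q α) :=
  (continuous_const.mul (continuous_stdGaussianDensity.comp (continuous_id.div_const α))
    ).aestronglyMeasurable.mul (aestronglyMeasurable_Hfun hq α)

end OmegaFun

lemma mul_abs_log_le {p K : ℝ} (hp : 0 ≤ p) (hpK : p ≤ K) : p * |log p| ≤ 1 + K * |log K| := by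
  have hK : 0 ≤ K * |log K| := mul_nonneg (hp.trans hpK) (abs_nonneg _)
  rcases le_or_gt p 1 with hp₁ | hp₁
  · rcases hp.eq_or_lt with rfl | hp₀
    · simp only [zero_mul]
      linarith
    · have := abs_log_mul_self_lt p hp₀ hp₁
      rw [abs_mul, abs_of_pos hp₀, mul_comm] at this
      linarith
  · have hlog : 0 ≤ log p := log_nonneg hp₁.le
    rw [abs_of_nonneg hlog, abs_of_nonneg (log_nonneg (hp₁.le.trans hpK))]
    have := mul_le_mul hpK (log_le_log (by linarith) hpK) hlog (by linarith)
    linarith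

lemma abs_mul_log_div_le {p w K L : ℝ} (hp : 0 ≤ p) (hpK : p ≤ K) (hw : 0 < w)
    (hwL : |log w| ≤ L) : |p * log (p / w)| ≤ 1 + K * |log K| + K * L := by
  have hK : 0 ≤ K := hp.trans hpK
  rcases hp.eq_or_lt with rfl | hp₀
  · have := mul_nonneg hK (abs_nonneg (log K))
    have := mul_nonneg hK ((abs_nonneg _).trans hwL)
    simp only [zero_div, log_zero, mul_zero, abs_zero]
    linarith
  calc |p * log (p / w)| = p * |log p - log w| := by
        rw [abs_mul, abs_of_pos hp₀, log_div hp₀.ne' hw.ne']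
    _ ≤ p * |log p| + p * |log w| := by
        rw [← mul_add]
        exact mul_le_mul_of_nonneg_left (abs_sub _ _) hp
    _ ≤ 1 + K * |log K| + K * L :=
        add_le_add (mul_abs_log_le hp hpK) (mul_le_mul hpK hwL (abs_nonneg _) hK)

lemma norm_mul_log_div_le_indicator {X : Type*} {p w : X → ℝ} {S : Set X} {K L : ℝ}
    (hp : ∀ x, 0 ≤ p x) (hpK : ∀ x, p x ≤ K) (hp_supp : support p ⊆ S)
    (hw : ∀ x ∈ S, 0 < w x ∧ |log (w x)| ≤ L) (x : X) :
    ‖p x * log (p x / w x)‖ ≤ S.indicator (fun _ => 1 + K * |log K| + K * L) x := by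
  by_cases hx : x ∈ S
  · rw [indicator_of_mem hx]
    exact abs_mul_log_div_le (hp x) (hpK x) (hw x hx).1 (hw x hx).2
  · simp [indicator_of_notMem hx, notMem_support.1 (mt (@hp_supp x) hx)]

theorem statement13_general (B C K : ℝ)
    (q : ℝ → ℝ) (hq_nonneg : ∀ x, 0 ≤ q x)
    (hq_one : ∫ x, q x = 1) (hq_supp : Function.support q ⊆ Set.Icc (-B) B)
    (pT : ℝ → ℝ) (hpT_meas : Measurable pT) (hpT_nonneg : ∀ x, 0 ≤ pT x)
    (hpT_supp : Function.support pT ⊆ Set.Icc (-C) C)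
    (hpT_bdd : ∀ x, pT x ≤ K) :
    Tendsto (fun α : ℝ => ∫ x : ℝ, pT x * Real.log (pT x / omegaFun q α x))
      (nhdsWithin 1 (Set.Iio 1))
      (nhds (∫ x : ℝ, pT x * Real.log (pT x / stdGaussianDensity x))) := by
  have hq_int : Integrable q := .of_integral_ne_zero (by simp [hq_one])
  obtain ⟨L, hL⟩ := exists_abs_log_omegaFun_le hq_nonneg hq_one hq_supp C
  refine (tendsto_integral_filter_of_dominated_convergence
    ((Icc (-C) C).indicator fun _ => 1 + K * |log K| + K * L) ?_ ?_ ?_ ?_).mono_left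
    nhdsWithin_le_nhds
  · refine .of_forall fun α => hpT_meas.aestronglyMeasurable.mul ?_
    exact (hpT_meas.aemeasurable.div
      (aestronglyMeasurable_omegaFun hq_int.aestronglyMeasurable α).aemeasurable).log
      |>.aestronglyMeasurable
  · filter_upwards [Icc_mem_nhds (by norm_num : (1 / 2 : ℝ) < 1) (by norm_num : (1 : ℝ) < 3 / 2)]
      with α hα
    exact .of_forall (norm_mul_log_div_le_indicator hpT_nonneg hpT_bdd hpT_supp (hL α hα))
  · exact (integrable_indicator_iff measurableSet_Icc).2 (integrableOn_const measure_Icc_lt_top.ne)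
  · refine .of_forall fun x => ?_
    have hρ := stdGaussianDensity_pos x
    rcases (hpT_nonneg x).eq_or_lt with hx | hx
    · simp [← hx]
    · exact tendsto_const_nhds.mul ((tendsto_const_nhds.div
        (tendsto_omegaFun hq_nonneg hq_one hq_supp x) hρ.ne').log (div_pos hx hρ).ne')

/-- If `q` is a probability density supported in `[-B,B]` and `p_T` a bounded probability
density supported in `[-C,C]`, then `∫ p_T log(p_T/ω_α) → ∫ p_T log(p_T/ρ)` as `α → 1⁻`. -/
theorem statement13 (B C K : ℝ) (hB : 0 < B) (hC : 0 < C)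
    (q : ℝ → ℝ) (hq_meas : Measurable q) (hq_nonneg : ∀ x, 0 ≤ q x)
    (hq_one : ∫ x, q x = 1) (hq_supp : Function.support q ⊆ Set.Icc (-B) B)
    (pT : ℝ → ℝ) (hpT_meas : Measurable pT) (hpT_nonneg : ∀ x, 0 ≤ pT x)
    (hpT_one : ∫ x, pT x = 1) (hpT_supp : Function.support pT ⊆ Set.Icc (-C) C)
    (hpT_bdd : ∀ x, pT x ≤ K) :
    Tendsto (fun α : ℝ => ∫ x : ℝ, pT x * Real.log (pT x / omegaFun q α x))
      (nhdsWithin 1 (Set.Iio 1))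
      (nhds (∫ x : ℝ, pT x * Real.log (pT x / stdGaussianDensity x))) :=
  statement13_general B C K q hq_nonneg hq_one hq_supp pT hpT_meas hpT_nonneg hpT_supp hpT_bdd
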